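/- Let X and Y be real Fréchet spaces and T : X → Y a surjective continuous linear map whose kernel is one-dimensional. If A ⊆ X is a closed polyhedron, then T(A) is a closed polyhedron in Y. -/

import Mathlib

/-!
The kernel of `T` is a line `ℝ ∙ e`, so `T '' A` consists of the `T x` for which the system
`f k x + t * f k e ≤ λ k` is solvable in `t`. Fourier–Motzkin elimination of `t` rewrites this as
finitely many inequalities `g r x ≤ μ r` whose functionals vanish at `e`, hence factor as
`g r = h r ∘ T`. The factors `h r` are continuous because `T` is a quotient map: this is the open
mapping theorem for complete metrizable spaces, proved by the usual Baire category argument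
(`closure (T '' V)` is a neighbourhood of `0`) followed by successive approximation in `X`.
-/

/-- A subset `P` of a real topological vector space `X` is a closed polyhedron if there
exist a positive integer `n`, continuous linear functionals `f₁,…,fₙ` on `X`, and reals
`λ₁,…,λₙ` such that `P = {x : fₖ x ≤ λₖ for all k}`. -/
def IsClosedPolyhedron {X : Type*} [AddCommGroup X] [Module ℝ X] [TopologicalSpace X]
    (P : Set X) : Prop :=
  ∃ n : ℕ, 0 < n ∧ ∃ (f : Fin n → X →L[ℝ] ℝ) (lam : Fin n → ℝ),
    P = {x : X | ∀ k, f k x ≤ lam k}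

open Filter Set Topology Pointwise Finset Uniformity

theorem upperBounds_inter_lowerBounds_nonempty {α : Type*} [ConditionallyCompleteLattice α]
    {s t : Set α} (hs : BddAbove s) (ht : BddBelow t) (hst : ∀ x ∈ s, ∀ y ∈ t, x ≤ y) :
    (upperBounds s ∩ lowerBounds t).Nonempty := by
  rcases s.eq_empty_or_nonempty with rfl | hs'
  · obtain ⟨c, hc⟩ := ht
    exact ⟨c, by simp, hc⟩
  rcases t.eq_empty_or_nonempty with rfl | ht'
  · obtain ⟨c, hc⟩ := hs
    exact ⟨c, hc, by simp⟩
  exact exists_between_of_forall_le hs' ht' hst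

theorem exists_forall_mul_le_iff {ι : Type*} [Finite ι] (a c : ι → ℝ) :
    (∃ t : ℝ, ∀ k, t * a k ≤ c k) ↔
      (∀ k, a k = 0 → 0 ≤ c k) ∧ ∀ i j, 0 < a i → a j < 0 → a j * c i ≤ a i * c j := by
  constructor
  · rintro ⟨t, ht⟩
    refine ⟨fun k hk => by simpa [hk] using ht k, fun i j hi hj => ?_⟩
    nlinarith [mul_le_mul_of_nonneg_left (ht j) hi.le,
      mul_le_mul_of_nonneg_left (ht i) (neg_nonneg.2 hj.le)]
  rintro ⟨hzero, hpair⟩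
  obtain ⟨t, hlow, hupp⟩ := upperBounds_inter_lowerBounds_nonempty
    (((fun j => c j / a j) '' {j | a j < 0}).toFinite.bddAbove)
    (((fun i => c i / a i) '' {i | 0 < a i}).toFinite.bddBelow) (by
      rintro _ ⟨j, hj, rfl⟩ _ ⟨i, hi, rfl⟩
      rw [div_le_iff_of_neg hj, div_mul_eq_mul_div, div_le_iff₀ hi]
      linarith [hpair i j hi hj])
  refine ⟨t, fun k => ?_⟩
  rcases lt_trichotomy (a k) 0 with hk | hk | hk
  · exact (div_le_iff_of_neg hk).1 (hlow ⟨k, hk, rfl⟩)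
  · simpa [hk] using hzero k hk
  · exact (le_div_iff₀ hk).1 (hupp ⟨k, hk, rfl⟩)

theorem isClosedPolyhedron_setOf_forall_le {ι X : Type*} [Finite ι] [AddCommGroup X]
    [Module ℝ X] [TopologicalSpace X] (f : ι → X →L[ℝ] ℝ) (lam : ι → ℝ) :
    IsClosedPolyhedron {x : X | ∀ i, f i x ≤ lam i} := by
  -- an extra trivial inequality `0 ≤ 0` keeps the index type nonempty
  let e := Finite.equivFin (Option ι)
  refine ⟨Nat.card (Option ι), Nat.card_pos, fun k => (e.symm k).elim 0 f,
    fun k => (e.symm k).elim 0 lam, ?_⟩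
  ext x
  simp only [mem_ofPred_eq, e.symm.forall_congr_left, Option.forall]
  simp

namespace FourierMotzkin

variable {ι X : Type*} [AddCommGroup X] [Module ℝ X] [TopologicalSpace X]
  (f : ι → X →L[ℝ] ℝ) (lam : ι → ℝ) (e : X)

abbrev Row : Type _ := {p : ι × ι // 0 < f p.1 e ∧ f p.2 e < 0} ⊕ {k // f k e = 0}

def functional : Row f e → X →L[ℝ] ℝ
  | .inl p => f p.1.1 e • f p.1.2 - f p.1.2 e • f p.1.1
  | .inr k => f k

def bound : Row f e → ℝ
  | .inl p => f p.1.1 e * lam p.1.2 - f p.1.2 e * lam p.1.1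
  | .inr k => lam k

theorem functional_apply_self : ∀ r, functional f e r e = 0
  | .inl p => by simp [functional, mul_comm]
  | .inr k => k.2

theorem exists_forall_add_smul_le_iff [Finite ι] (x : X) :
    (∃ t : ℝ, ∀ k, f k (x + t • e) ≤ lam k) ↔ ∀ r, functional f e r x ≤ bound f lam e r := by
  simp only [map_add, map_smul, smul_eq_mul, add_comm (f _ x), ← le_sub_iff_add_le,
    exists_forall_mul_le_iff, Sum.forall, Subtype.forall, Prod.forall, and_imp, functional, bound]
  refine and_comm.trans (and_congr (forall₄_congr fun i j _ _ => ?_) (by simp_rw [sub_nonneg]))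
  simp only [sub_apply, smul_apply, smul_eq_mul]
  constructor <;> intro h <;> linarith

end FourierMotzkin

theorem LinearMap.mem_image_iff_exists_add_smul_mem {K X Y : Type*} [Ring K] [AddCommGroup X]
    [Module K X] [AddCommGroup Y] [Module K Y] {T : X →ₗ[K] Y} {e : X}
    (he : LinearMap.ker T = K ∙ e) (A : Set X) (x : X) :
    T x ∈ T '' A ↔ ∃ t : K, x + t • e ∈ A := by
  constructor
  · rintro ⟨x', hx', hTx'⟩
    have : x' - x ∈ K ∙ e := by rw [← he, LinearMap.mem_ker, map_sub, hTx', sub_self]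
    obtain ⟨t, ht⟩ := Submodule.mem_span_singleton.1 this
    exact ⟨t, by rwa [ht, add_sub_cancel]⟩
  · rintro ⟨t, ht⟩
    have : t • e ∈ LinearMap.ker T :=
      he ▸ Submodule.smul_mem _ t (Submodule.mem_span_singleton_self e)
    exact ⟨_, ht, by rw [map_add, LinearMap.mem_ker.1 this, add_zero]⟩

theorem ContinuousLinearMap.exists_comp_eq_of_ker_le {K X Y Z : Type*} [DivisionRing K]
    [AddCommGroup X] [Module K X] [TopologicalSpace X] [AddCommGroup Y] [Module K Y]
    [TopologicalSpace Y] [AddCommGroup Z] [Module K Z] [TopologicalSpace Z]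
    (T : X →L[K] Y) (hT : IsQuotientMap T) (g : X →L[K] Z)
    (hg : LinearMap.ker (T : X →ₗ[K] Y) ≤ LinearMap.ker (g : X →ₗ[K] Z)) :
    ∃ h : Y →L[K] Z, h.comp T = g := by
  obtain ⟨S, hS⟩ := (T : X →ₗ[K] Y).exists_rightInverse_of_surjective
    (LinearMap.range_eq_top.2 hT.surjective)
  have hgS : ∀ x, g (S (T x)) = g x := fun x => by
    have : S (T x) - x ∈ LinearMap.ker (T : X →ₗ[K] Y) := by
      simpa [sub_eq_zero] using LinearMap.congr_fun hS (T x)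
    simpa [sub_eq_zero] using hg this
  have hcomp : ⇑((g : X →ₗ[K] Z) ∘ₗ S) ∘ T = g := funext hgS
  exact ⟨⟨(g : X →ₗ[K] Z) ∘ₗ S, hT.continuous_iff.2 (hcomp ▸ g.continuous)⟩, by ext; exact hgS _⟩

theorem sum_Ico_mem_of_add_subset {X : Type*} [AddCommMonoid X] {u : ℕ → Set X} {x : ℕ → X}
    (h0 : ∀ n, (0 : X) ∈ u n) (hadd : ∀ n, u (n + 1) + u (n + 1) ⊆ u n)
    (hx : ∀ n, x n ∈ u (n + 1)) (m n : ℕ) :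
    ∑ i ∈ Ico m n, x i ∈ u m := by
  induction h : n - m generalizing m with
  | zero => simpa [Finset.Ico_eq_empty_of_le (Nat.sub_eq_zero_iff_le.1 h)] using h0 m
  | succ k ih =>
    rw [Finset.sum_eq_sum_Ico_succ_bot (by omega)]
    exact hadd m (add_mem_add (hx m) (ih (m + 1) (by omega)))

theorem cauchySeq_sum_range_of_add_subset {X : Type*} [AddCommGroup X] [UniformSpace X]
    [IsUniformAddGroup X] {u : ℕ → Set X} {x : ℕ → X} (hu : (𝓝 0).HasAntitoneBasis u)
    (hadd : ∀ n, u (n + 1) + u (n + 1) ⊆ u n) (hx : ∀ n, x n ∈ u (n + 1)) :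
    CauchySeq fun n => ∑ i ∈ range n, x i := by
  refine hu.toHasBasis.uniformity_of_nhds_zero_swapped.cauchySeq_iff'.2
    fun N _ => ⟨N, fun n hn => ?_⟩
  simp only [mem_ofPred_eq, ← Finset.sum_Ico_eq_sub _ hn]
  exact sum_Ico_mem_of_add_subset (fun n => mem_of_mem_nhds (hu.mem n)) hadd hx N n

theorem exists_sub_mem_of_mem_closure {Y : Type*} [AddCommGroup Y] [TopologicalSpace Y]
    [IsTopologicalAddGroup Y] {S N : Set Y} {z : Y} (hz : z ∈ closure S) (hN : N ∈ 𝓝 0) :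
    ∃ s ∈ S, z - s ∈ N := by
  obtain ⟨s, hs, hsz⟩ := mem_closure_iff_nhds_zero.1 hz _ (neg_mem_nhds_zero Y hN)
  exact ⟨s, hs, by simpa using hsz⟩

theorem IsTopologicalAddGroup.exists_antitone_basis_nhds_zero_subset (X : Type*)
    [AddCommGroup X] [TopologicalSpace X] [IsTopologicalAddGroup X] [FirstCountableTopology X]
    {W : Set X} (hW : W ∈ 𝓝 0) :
    ∃ u : ℕ → Set X,
      (𝓝 0).HasAntitoneBasis u ∧ (∀ n, u (n + 1) + u (n + 1) ⊆ u n) ∧ u 0 ⊆ W := by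
  obtain ⟨u, hu, hadd⟩ := IsTopologicalAddGroup.exists_antitone_basis_nhds_zero X
  obtain ⟨N, -, hN⟩ := hu.toHasBasis.mem_iff.1 hW
  refine ⟨fun n => u (n + N), hu.comp_mono (monotone_id.add_const N) (tendsto_add_atTop_nat N),
    fun n => ?_, by simpa using hN⟩
  simpa only [add_right_comm n 1 N] using hadd (n + N)

section OpenMapping

variable {X Y : Type*} [AddCommGroup X] [Module ℝ X] [AddCommGroup Y] [Module ℝ Y]
  [TopologicalSpace Y] [IsTopologicalAddGroup Y]

theorem LinearMap.closure_image_mem_nhds_zero [TopologicalSpace X] [IsTopologicalAddGroup X]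
    [ContinuousSMul ℝ X] [ContinuousConstSMul ℝ Y] [BaireSpace Y]
    (T : X →ₗ[ℝ] Y) (hT : Function.Surjective T) {V : Set X} (hV : V ∈ 𝓝 0) :
    closure (T '' V) ∈ 𝓝 0 := by
  obtain ⟨V₁, hV₁, -, hV₁neg, hV₁V⟩ := exists_closed_nhds_zero_neg_eq_add_subset hV
  set C := closure (T '' V₁)
  have hcover : ⋃ n : ℕ, ((n : ℝ) + 1) • C = univ := by
    refine eq_univ_of_forall fun y => ?_
    obtain ⟨x, rfl⟩ := hT y
    have hlim : Tendsto (fun n : ℕ => ((n : ℝ) + 1)⁻¹ • x) atTop (𝓝 0) := by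
      simpa using (tendsto_one_div_add_atTop_nhds_zero_nat (𝕜 := ℝ)).smul_const x
    obtain ⟨n, hn⟩ := (hlim.eventually_mem hV₁).exists
    refine mem_iUnion.2 ⟨n, (mem_smul_set_iff_inv_smul_mem₀ (by positivity) _ _).2 ?_⟩
    rw [← map_smul]
    exact subset_closure (mem_image_of_mem T hn)
  obtain ⟨n, hn⟩ := nonempty_interior_of_iUnion_of_closed
    (fun n : ℕ => isClosed_closure.smul_of_ne_zero (by positivity : (n : ℝ) + 1 ≠ 0)) hcover
  obtain ⟨y₀, hy₀⟩ : (interior C).Nonempty := by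
    rwa [interior_smul₀ (by positivity), smul_set_nonempty] at hn
  -- `interior C - y₀` is an open neighbourhood of `0` inside `C - C ⊆ closure (T '' V)`
  refine mem_of_superset ((isOpen_interior.sub_right (t := {y₀})).mem_nhds
    ⟨y₀, hy₀, y₀, rfl, sub_self y₀⟩) ?_
  rintro _ ⟨y, hy, _, rfl, rfl⟩
  refine map_mem_closure₂ continuous_sub (interior_subset hy) (interior_subset hy₀) ?_
  rintro _ ⟨a, ha, rfl⟩ _ ⟨b, hb, rfl⟩
  refine ⟨a - b, hV₁V ?_, map_sub T a b⟩
  rw [sub_eq_add_neg]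
  exact Set.add_mem_add ha (hV₁neg ▸ Set.neg_mem_neg.2 hb)

theorem ContinuousLinearMap.exists_seq_sub_map_sum_mem_closure [TopologicalSpace X]
    (T : X →L[ℝ] Y) {u : ℕ → Set X} (hu : ∀ n, closure (T '' u n) ∈ 𝓝 0) {y : Y}
    (hy : y ∈ closure (T '' u 1)) :
    ∃ x : ℕ → X, (∀ n, x n ∈ u (n + 1)) ∧
      ∀ n, y - T (∑ i ∈ range n, x i) ∈ closure (T '' u (n + 1)) := by
  have step : ∀ (n : ℕ) (z : Y), ∃ x : X, z ∈ closure (T '' u (n + 1)) →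
      x ∈ u (n + 1) ∧ z - T x ∈ closure (T '' u (n + 2)) := by
    intro n z
    by_cases hz : z ∈ closure (T '' u (n + 1))
    · obtain ⟨_, ⟨x, hx, rfl⟩, hzx⟩ := exists_sub_mem_of_mem_closure hz (hu (n + 2))
      exact ⟨x, fun _ => ⟨hx, hzx⟩⟩
    · exact ⟨0, fun h => absurd h hz⟩
  choose next hnext using step
  let r : ℕ → Y := fun n => Nat.rec y (fun n z => z - T (next n z)) n
  have hr : ∀ n, r n ∈ closure (T '' u (n + 1)) := fun n => by
    induction n with
    | zero => exact hy
    | succ n ih => exact (hnext n _ ih).2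
  have hr_eq : ∀ n, y - T (∑ i ∈ range n, next i (r i)) = r n := fun n => by
    induction n with
    | zero => simp [r]
    | succ n ih => rw [sum_range_succ, map_add, ← sub_sub, ih]
  exact ⟨fun n => next n (r n), fun n => (hnext n _ (hr n)).1, fun n => hr_eq n ▸ hr n⟩

theorem ContinuousLinearMap.tendsto_zero_of_mem_closure_image [TopologicalSpace X]
    (T : X →L[ℝ] Y) {u : ℕ → Set X} (hu : (𝓝 0).HasAntitoneBasis u) {r : ℕ → Y}
    (hr : ∀ n, r n ∈ closure (T '' u n)) : Tendsto r atTop (𝓝 0) := by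
  refine (closed_nhds_basis 0).tendsto_right_iff.2 fun N ⟨hN, hNc⟩ => ?_
  have : T ⁻¹' N ∈ 𝓝 0 := T.continuous.continuousAt.preimage_mem_nhds (by simpa using hN)
  filter_upwards [hu.eventually_subset this] with n hn
  exact closure_minimal (image_subset_iff.2 hn) hNc (hr n)

variable [UniformSpace X] [IsUniformAddGroup X] [ContinuousSMul ℝ X] [CompleteSpace X]
  [ContinuousConstSMul ℝ Y] [BaireSpace Y] [T2Space Y]

theorem ContinuousLinearMap.closure_image_subset_image_closure (T : X →L[ℝ] Y)
    (hT : Function.Surjective T) {u : ℕ → Set X} (hu : (𝓝 0).HasAntitoneBasis u)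
    (hadd : ∀ n, u (n + 1) + u (n + 1) ⊆ u n) :
    closure (T '' u 1) ⊆ T '' closure (u 0) := by
  intro y hy
  obtain ⟨x, hx, hres⟩ := T.exists_seq_sub_map_sum_mem_closure
    (fun n => (T : X →ₗ[ℝ] Y).closure_image_mem_nhds_zero hT (hu.mem n)) hy
  obtain ⟨x', hlim⟩ := cauchySeq_tendsto_of_complete (cauchySeq_sum_range_of_add_subset hu hadd hx)
  refine ⟨x', mem_closure_of_tendsto hlim (Eventually.of_forall fun n => ?_), ?_⟩
  · simpa using sum_Ico_mem_of_add_subset (fun n => mem_of_mem_nhds (hu.mem n)) hadd hx 0 n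
  have hres0 := T.tendsto_zero_of_mem_closure_image hu
    fun n => closure_mono (image_mono (hu.antitone n.le_succ)) (hres n)
  exact tendsto_nhds_unique ((T.continuous.tendsto x').comp hlim)
    (by simpa [Function.comp_def] using (tendsto_const_nhds (x := y)).sub hres0)

theorem ContinuousLinearMap.isOpenMap_of_baireSpace [FirstCountableTopology X] (T : X →L[ℝ] Y)
    (hT : Function.Surjective T) : IsOpenMap T := by
  refine IsTopologicalAddGroup.isOpenMap_iff_nhds_zero.2 (le_map_iff.2 fun W hW => ?_)
  obtain ⟨V, hV, hVc, hVW⟩ := exists_mem_nhds_isClosed_subset hW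
  obtain ⟨u, hu, hadd, hu0⟩ := IsTopologicalAddGroup.exists_antitone_basis_nhds_zero_subset X hV
  refine mem_of_superset ((T : X →ₗ[ℝ] Y).closure_image_mem_nhds_zero hT (hu.mem 1)) ?_
  exact (T.closure_image_subset_image_closure hT hu hadd).trans
    (image_mono ((closure_minimal hu0 hVc).trans hVW))

end OpenMapping

/-- If `X`, `Y` are real Fréchet spaces and `T : X → Y` is a surjective continuous
linear map whose kernel is one-dimensional, then the image of a closed polyhedron
of `X` under `T` is a closed polyhedron of `Y`. -/
theorem image_closedPolyhedron_of_ker_one_dim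
    {X Y : Type*}
    [AddCommGroup X] [Module ℝ X] [UniformSpace X] [IsUniformAddGroup X]
    [ContinuousSMul ℝ X] [CompleteSpace X] [TopologicalSpace.MetrizableSpace X]
    [AddCommGroup Y] [Module ℝ Y] [UniformSpace Y] [IsUniformAddGroup Y]
    [ContinuousSMul ℝ Y] [CompleteSpace Y] [TopologicalSpace.MetrizableSpace Y]
    (T : X →L[ℝ] Y) (hT : Function.Surjective T)
    (hker : Module.rank ℝ (LinearMap.ker (T : X →ₗ[ℝ] Y)) = 1)
    (A : Set X) (hA : IsClosedPolyhedron A) :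
    IsClosedPolyhedron (T '' A) := by
  obtain ⟨n, -, f, lam, rfl⟩ := hA
  obtain ⟨e, he⟩ : ∃ e : X, LinearMap.ker (T : X →ₗ[ℝ] Y) = ℝ ∙ e :=
    ⟨_, ((Submodule.rank_le_one_iff_isPrincipal _).1 hker.le).span_singleton_generator.symm⟩
  -- makes the complete space `Y` a Baire space
  have : (𝓤 Y).IsCountablyGenerated := IsUniformAddGroup.uniformity_countably_generated
  have hTq : IsQuotientMap T := (T.isOpenMap_of_baireSpace hT).isQuotientMap T.continuous hT
  choose h hh using fun r => T.exists_comp_eq_of_ker_le hTq (FourierMotzkin.functional f e r) <| by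
    rw [he, Submodule.span_singleton_le_iff_mem]
    exact FourierMotzkin.functional_apply_self f e r
  convert isClosedPolyhedron_setOf_forall_le h (FourierMotzkin.bound f lam e)
  ext y
  obtain ⟨x, rfl⟩ := hT y
  refine (LinearMap.mem_image_iff_exists_add_smul_mem he _ x).trans ?_
  simp only [mem_ofPred_eq, FourierMotzkin.exists_forall_add_smul_le_iff, ← hh,
    ContinuousLinearMap.comp_apply]
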